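/- arXiv:1510.04843 — 3 statements merged into one kernel-verified Lean document; each statement's English description precedes it below -/
import Mathlib

section
/- If F is a forest, e an edge of F, and F' = F minus e, then ℓ(F') - 2·comp(F') ≤ ℓ(F) - 2·comp(F), where ℓ denotes the number of vertices of degree 1 and comp denotes the number of connected components containing at least one edge. -/
open SimpleGraph
open scoped Classical

/-- Degree of a vertex. -/
noncomputable def deg {V : Type} (G : SimpleGraph V) (v : V) : ℕ := Nat.card (G.neighborSet v)

/-- Number of vertices of degree exactly 1 (leaves for trees/forests). -/
noncomputable def numLeaves {V : Type} (G : SimpleGraph V) : ℕ := Nat.card {v : V // deg G v = 1}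

/-- Number of connected components containing at least one edge. -/
noncomputable def numEdgeComps {V : Type} (G : SimpleGraph V) : ℕ :=
  Nat.card {c : G.ConnectedComponent // ∃ v w : V, G.Adj v w ∧ G.connectedComponentMk v = c}

/-- Maximum degree. -/
noncomputable def maxDeg {V : Type} (G : SimpleGraph V) : ℕ := sSup (Set.range (deg G))

/-- `G` and `H` pack: a bijection sends edges of `H` to non-edges of `G`. -/
def Packs {V W : Type} (G : SimpleGraph V) (H : SimpleGraph W) : Prop :=
  ∃ f : W ≃ V, ∀ x y : W, H.Adj x y → ¬ G.Adj (f x) (f y)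

/-- `G` contains a copy of `H` as a subgraph. -/
def ContainsCopy {V W : Type} (G : SimpleGraph V) (H : SimpleGraph W) : Prop :=
  ∃ f : W ↪ V, ∀ x y : W, H.Adj x y → G.Adj (f x) (f y)

/-- `G` realizes the degree sequence `π`. -/
def IsRealization {n : ℕ} (G : SimpleGraph (Fin n)) (π : Fin n → ℕ) : Prop :=
  ∀ i, deg G i = π i

/-- `π` is a graphic sequence. -/
def Graphic {n : ℕ} (π : Fin n → ℕ) : Prop :=
  ∃ G : SimpleGraph (Fin n), IsRealization G π

/-- `π` is potentially `H`-graphic. -/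
def PotentiallyGraphic {n : ℕ} {W : Type} (π : Fin n → ℕ) (H : SimpleGraph W) : Prop :=
  ∃ G : SimpleGraph (Fin n), IsRealization G π ∧ ContainsCopy G H

/-- The complementary sequence `π̄ = (n-1-d_n, …, n-1-d_1)`. -/
def compSeq {n : ℕ} (π : Fin n → ℕ) : Fin n → ℕ := fun i => n - 1 - π i.rev

/-- The potential-Ramsey number. -/
noncomputable def rpot {W₁ W₂ : Type} (H₁ : SimpleGraph W₁) (H₂ : SimpleGraph W₂) : ℕ :=
  sInf {N : ℕ | ∀ π : Fin N → ℕ, Antitone π → Graphic π →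
    PotentiallyGraphic π H₁ ∨ PotentiallyGraphic (compSeq π) H₂}

/-- The star `K_{1,t-1}` on `t` vertices, centered at vertex `0`. -/
def starGraph (t : ℕ) : SimpleGraph (Fin t) := SimpleGraph.fromRel (fun i _ => (i : ℕ) = 0)

/-!
A component without edges is a single isolated vertex, so
`ℓ(G) - 2·comp(G) = ∑ v, w(deg v) - 2·#components(G)`, where the weight `w` is `1` on leaves,
`2` on isolated vertices and `0` elsewhere. In a forest every edge `ab` is a bridge: deleting it
creates exactly one new component and lowers only the degrees of `a` and `b`, each by one, which
raises their weights by at most `1` each.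
-/

def leafWeight (d : ℕ) : ℤ := (if d = 1 then 1 else 0) + 2 * if d = 0 then 1 else 0

lemma leafWeight_pred_sub_le (d : ℕ) : leafWeight (d - 1) - leafWeight d ≤ 1 := by
  unfold leafWeight
  split_ifs <;> omega

namespace SimpleGraph

variable {V : Type} {G : SimpleGraph V} {a b u v : V}

lemma deg_eq_ncard (G : SimpleGraph V) (v : V) : deg G v = (G.neighborSet v).ncard :=
  (Nat.card_coe_set_eq _).symm

lemma deg_eq_zero_iff [Finite V] : deg G v = 0 ↔ ∀ w, ¬ G.Adj v w := by
  rw [deg_eq_ncard, Set.ncard_eq_zero]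
  exact Set.eq_empty_iff_forall_notMem

lemma neighborSet_deleteEdges_left :
    (G.deleteEdges {s(a, b)}).neighborSet a = G.neighborSet a \ {b} := by
  ext w
  simp +contextual

lemma neighborSet_deleteEdges_of_ne (ha : v ≠ a) (hb : v ≠ b) :
    (G.deleteEdges {s(a, b)}).neighborSet v = G.neighborSet v := by
  ext w
  simp [ha, hb]

lemma deg_deleteEdges_left (hab : G.Adj a b) :
    deg (G.deleteEdges {s(a, b)}) a = deg G a - 1 := by
  rw [deg_eq_ncard, deg_eq_ncard, neighborSet_deleteEdges_left,
    Set.ncard_sdiff_singleton_of_mem ((G.mem_neighborSet a b).mpr hab)]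

lemma deg_deleteEdges_right (hab : G.Adj a b) :
    deg (G.deleteEdges {s(a, b)}) b = deg G b - 1 := by
  rw [Sym2.eq_swap]
  exact deg_deleteEdges_left hab.symm

lemma deg_deleteEdges_of_ne (ha : v ≠ a) (hb : v ≠ b) :
    deg (G.deleteEdges {s(a, b)}) v = deg G v := by
  rw [deg_eq_ncard, deg_eq_ncard, neighborSet_deleteEdges_of_ne ha hb]

lemma Reachable.exists_adj_of_ne (h : G.Reachable u v) (hne : u ≠ v) : ∃ w, G.Adj u w :=
  let ⟨p⟩ := h
  ⟨_, p.adj_snd (p.not_nil_of_ne hne)⟩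

lemma exists_adj_connectedComponentMk_eq_iff :
    (∃ x y, G.Adj x y ∧ G.connectedComponentMk x = G.connectedComponentMk v) ↔ ∃ w, G.Adj v w := by
  refine ⟨fun ⟨x, y, hxy, hx⟩ => ?_, fun ⟨w, hw⟩ => ⟨v, w, hw, rfl⟩⟩
  by_cases hvx : v = x
  · exact ⟨y, hvx ▸ hxy⟩
  · exact (ConnectedComponent.exact hx).symm.exists_adj_of_ne hvx

lemma numEdgeComps_add_card_deg_eq_zero [Finite V] (G : SimpleGraph V) :
    numEdgeComps G + Nat.card {v // deg G v = 0} = Nat.card G.ConnectedComponent := by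
  rw [numEdgeComps, ← Nat.card_congr (Equiv.sumCompl fun c : G.ConnectedComponent =>
    ∃ v w, G.Adj v w ∧ G.connectedComponentMk v = c), Nat.card_sum]
  congr 1
  refine Nat.card_congr (Equiv.ofBijective
    (fun v => ⟨G.connectedComponentMk v, ?_⟩) ⟨fun v w hvw => ?_, fun c => ?_⟩)
  · rw [exists_adj_connectedComponentMk_eq_iff, not_exists]
    exact deg_eq_zero_iff.mp v.2
  · by_contra hne
    obtain ⟨x, hx⟩ := (ConnectedComponent.exact (congrArg Subtype.val hvw)).exists_adj_of_ne
      (Subtype.val_injective.ne hne)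
    exact deg_eq_zero_iff.mp v.2 x hx
  · obtain ⟨c, hc⟩ := c
    induction c using ConnectedComponent.ind with | h v => ?_
    rw [exists_adj_connectedComponentMk_eq_iff, not_exists] at hc
    exact ⟨⟨v, deg_eq_zero_iff.mpr hc⟩, rfl⟩

lemma reachable_deleteEdges_or_of_reachable (h : G.Reachable u v) :
    (G.deleteEdges {s(a, b)}).Reachable u v ∨
      (G.deleteEdges {s(a, b)}).Reachable u a ∧ (G.deleteEdges {s(a, b)}).Reachable b v ∨
      (G.deleteEdges {s(a, b)}).Reachable u b ∧ (G.deleteEdges {s(a, b)}).Reachable a v := by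
  obtain ⟨p⟩ := h
  induction p with
  | nil => exact .inl .rfl
  | @cons u x v hux p ih =>
    by_cases he : (G.deleteEdges {s(a, b)}).Adj u x
    · rcases ih with h | ⟨h, h'⟩ | ⟨h, h'⟩
      · exact .inl (he.reachable.trans h)
      · exact .inr (.inl ⟨he.reachable.trans h, h'⟩)
      · exact .inr (.inr ⟨he.reachable.trans h, h'⟩)
    · have hux' : s(u, x) = s(a, b) := by_contra fun hne => he (deleteEdges_adj.mpr ⟨hux, hne⟩)
      rcases Sym2.eq_iff.mp hux' with ⟨rfl, rfl⟩ | ⟨rfl, rfl⟩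
      · rcases ih with h | ⟨h, h'⟩ | ⟨h, h'⟩
        · exact .inr (.inl ⟨.rfl, h⟩)
        · exact .inl (h.symm.trans h')
        · exact .inl h'
      · rcases ih with h | ⟨h, h'⟩ | ⟨h, h'⟩
        · exact .inr (.inr ⟨.rfl, h⟩)
        · exact .inl h'
        · exact .inl (h.symm.trans h')

lemma card_connectedComponent_deleteEdges [Finite V] (hab : G.Adj a b)
    (hbr : G.IsBridge s(a, b)) :
    Nat.card (G.deleteEdges {s(a, b)}).ConnectedComponent = Nat.card G.ConnectedComponent + 1 := by
  set G' := G.deleteEdges {s(a, b)}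
  let θ : G'.ConnectedComponent → G.ConnectedComponent :=
    ConnectedComponent.map (Hom.ofLE (deleteEdges_le _))
  have hθ (v : V) : θ (G'.connectedComponentMk v) = G.connectedComponentMk v := rfl
  have hab' : G'.connectedComponentMk a ≠ G'.connectedComponentMk b :=
    fun h => hbr (ConnectedComponent.exact h)
  -- `θ` identifies exactly the two sides of the bridge, so it is bijective off one of them.
  have hbij : Function.Bijective fun c : {c // c ≠ G'.connectedComponentMk b} => θ c := by
    refine ⟨fun ⟨c, hc⟩ ⟨d, hd⟩ hcd => ?_, fun x => ?_⟩
    · induction c using ConnectedComponent.ind with | h u => ?_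
      induction d using ConnectedComponent.ind with | h v => ?_
      rcases reachable_deleteEdges_or_of_reachable (ConnectedComponent.exact hcd) with
        h | ⟨-, h⟩ | ⟨h, -⟩
      · exact Subtype.ext (ConnectedComponent.sound h)
      · exact absurd (ConnectedComponent.sound h).symm hd
      · exact absurd (ConnectedComponent.sound h) hc
    · induction x using ConnectedComponent.ind with | h u => ?_
      by_cases hu : G'.connectedComponentMk u = G'.connectedComponentMk b
      · refine ⟨⟨_, hab'⟩, (hθ a).trans (ConnectedComponent.sound ?_)⟩
        exact hab.reachable.trans ((ConnectedComponent.exact hu).mono (deleteEdges_le _)).symm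
      · exact ⟨⟨_, hu⟩, hθ u⟩
  rw [← Nat.card_congr (Equiv.ofBijective _ hbij), ← Finite.card_option,
    Nat.card_congr (Equiv.optionSubtypeNe _)]

lemma numLeaves_sub_two_mul_numEdgeComps [Fintype V] (G : SimpleGraph V) :
    (numLeaves G : ℤ) - 2 * numEdgeComps G =
      ∑ v, leafWeight (deg G v) - 2 * Nat.card G.ConnectedComponent := by
  have hcard (p : V → Prop) [DecidablePred p] :
      (Nat.card {v // p v} : ℤ) = ∑ v, if p v then 1 else 0 := by
    rw [Nat.card_eq_fintype_card, Fintype.card_subtype, Finset.natCast_card_filter]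
  rw [← numEdgeComps_add_card_deg_eq_zero, numLeaves, Nat.cast_add, hcard, hcard]
  simp only [leafWeight, Finset.sum_add_distrib, ← Finset.mul_sum]
  ring

lemma sum_deg_deleteEdges [Fintype V] {M : Type*} [AddCommGroup M] (f : ℕ → M)
    (hab : G.Adj a b) :
    ∑ v, f (deg (G.deleteEdges {s(a, b)}) v) =
      ∑ v, f (deg G v) + (f (deg G a - 1) - f (deg G a)) + (f (deg G b - 1) - f (deg G b)) := by
  rw [add_assoc, ← sub_eq_iff_eq_add', ← Finset.sum_sub_distrib,
    Finset.sum_eq_add a b hab.ne (fun v _ hv => ?_) (by simp) (by simp),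
    deg_deleteEdges_left hab, deg_deleteEdges_right hab]
  rw [deg_deleteEdges_of_ne hv.1 hv.2, sub_self]

end SimpleGraph

/-- Deleting an edge from a forest does not increase ℓ - 2·comp. -/
theorem deleteEdge_leaves_comps {V : Type} [Fintype V] (F : SimpleGraph V)
    (hF : F.IsAcyclic) (a b : V) (hab : F.Adj a b) :
    (numLeaves (F.deleteEdges {s(a, b)}) : ℤ) - 2 * numEdgeComps (F.deleteEdges {s(a, b)})
      ≤ (numLeaves F : ℤ) - 2 * numEdgeComps F := by
  rw [numLeaves_sub_two_mul_numEdgeComps, numLeaves_sub_two_mul_numEdgeComps,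
    sum_deg_deleteEdges leafWeight hab,
    card_connectedComponent_deleteEdges hab (isAcyclic_iff_forall_adj_isBridge.mp hF hab)]
  have := leafWeight_pred_sub_le (deg F a)
  have := leafWeight_pred_sub_le (deg F b)
  push_cast
  linarith
end

section
/- Let F be a forest and G a graph, both on n vertices. If 3·Δ(G) + ℓ(F) - 2·comp(F) < n, then F and G pack. -/
/-!
Let `T(F) = ∑ᵥ (deg_F v - 2)⁺`. Induct on the edges of `F`: delete a leaf edge `xy` (`x` the leaf)
and let `f` pack the rest into `G`. If `f x f y` is an edge of `G`, swap `x` with a vertex `u`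
such that `u ≠ y`, `f u` is not adjacent to `f y`, and no neighbour `z` of `u` in `F - xy` has
`f z` adjacent to `f x`. At most `1 + Δ + (∑_{f z ~ f x} deg_F z - 1) ≤ 3Δ + T(F)` vertices fail
this (the `-1` because `y` is such a `z` and has lost the edge `xy`), so a good `u` exists when
`3Δ + T(F) < n`, a condition that survives deleting edges.

For a forest, `∑ deg = 2e`, `e + #components ≤ n` since every edge is a bridge, and the
components without an edge are isolated vertices; together these give `T(F) + 2 comp(F) ≤ ℓ(F)`.
-/

open SimpleGraph
open scoped Classical

open Finset

theorem Finset.sum_le_mul_card_add_sum_tsub {ι : Type*} [Fintype ι] (s : Finset ι) (d : ι → ℕ)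
    (k : ℕ) : ∑ i ∈ s, d i ≤ k * #s + ∑ i, (d i - k) :=
  calc ∑ i ∈ s, d i ≤ ∑ i ∈ s, (k + (d i - k)) := sum_le_sum fun _ _ => le_add_tsub
    _ = k * #s + ∑ i ∈ s, (d i - k) := by rw [sum_add_distrib, sum_const, smul_eq_mul, mul_comm]
    _ ≤ k * #s + ∑ i, (d i - k) := by gcongr; exact subset_univ s

namespace SimpleGraph

section Finite

variable {V : Type*} {G F : SimpleGraph V} {x y : V}

theorem Reachable.eq_of_isIsolated {v w : V} (h : G.Reachable v w) (hv : G.IsIsolated v) :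
    v = w := by
  obtain ⟨_ | ⟨hadj, _⟩⟩ := h
  · rfl
  · exact (hv _ hadj).elim

variable [Fintype V]

theorem IsAcyclic.exists_adj_degree_eq_one (hF : F.IsAcyclic) {a b : V} (hab : F.Adj a b) :
    ∃ x y, F.Adj x y ∧ F.degree x = 1 := by
  have : Nonempty V := ⟨a⟩
  obtain ⟨u, v, p, hp, hmax⟩ := Walk.exists_isPath_forall_isPath_length_le_length F
  have hnil : ¬p.Nil := by
    have := hmax a b (.cons hab .nil) (.of_adj hab)
    rw [← Walk.length_eq_zero_iff]
    simp only [Walk.length_cons, Walk.length_nil] at this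
    omega
  refine ⟨u, p.snd, p.adj_snd hnil, degree_eq_one_iff_existsUnique_adj.mpr
    ⟨p.snd, p.adj_snd hnil, fun w hw => hF.eq_snd_of_adj_start hp hw ?_⟩⟩
  by_contra hwp
  have := hmax w v (.cons hw.symm p) (hp.cons hwp)
  simp at this

theorem not_adj_deleteEdges_of_degree_eq_one (hxy : F.Adj x y) (hx : F.degree x = 1) (z : V) :
    ¬(F.deleteEdges {s(x, y)}).Adj x z := by
  obtain ⟨w, -, hw⟩ := degree_eq_one_iff_existsUnique_adj.mp hx
  rw [deleteEdges_adj]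
  rintro ⟨hxz, hne⟩
  exact hne (by rw [hw z hxz, hw y hxy]; rfl)

theorem ncard_edgeSet_deleteEdges_add_one (hxy : F.Adj x y) :
    (F.deleteEdges {s(x, y)}).edgeSet.ncard + 1 = F.edgeSet.ncard := by
  rw [edgeSet_deleteEdges, Set.ncard_sdiff_singleton_add_one (s := F.edgeSet) hxy]

@[elab_as_elim]
theorem IsAcyclic.induction_on_leaf {P : SimpleGraph V → Prop} (hF : F.IsAcyclic) (bot : P ⊥)
    (step : ∀ F x y, F.IsAcyclic → F.Adj x y → F.degree x = 1 →
      P (F.deleteEdges {s(x, y)}) → P F) : P F := by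
  induction hn : F.edgeSet.ncard generalizing F with
  | zero =>
    rwa [edgeSet_eq_empty.mp ((Set.ncard_eq_zero (Set.toFinite _)).mp hn)]
  | succ n ih =>
    obtain ⟨e, he⟩ := (Set.ncard_pos (Set.toFinite F.edgeSet)).mp (by omega)
    induction e using Sym2.ind with | _ a b => ?_
    obtain ⟨x, y, hxy, hx⟩ := hF.exists_adj_degree_eq_one (F.mem_edgeSet.mp he)
    refine step F x y hF hxy hx (ih (hF.anti (deleteEdges_le _)) ?_)
    have := ncard_edgeSet_deleteEdges_add_one hxy
    omega

theorem degree_lt_degree_of_le_of_not_adj {F' : SimpleGraph V} (hle : F' ≤ F) (hyx : F.Adj y x)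
    (hn : ¬F'.Adj y x) : F'.degree y < F.degree y := by
  rw [← card_neighborFinset_eq_degree, ← card_neighborFinset_eq_degree]
  refine card_lt_card ⟨fun z => ?_, fun h => hn ?_⟩
  · simpa only [mem_neighborFinset] using @hle y z
  · simpa using h ((F.mem_neighborFinset y x).mpr hyx)

theorem sum_degree_tsub_le_of_le {F' : SimpleGraph V} (hle : F' ≤ F) (k : ℕ) :
    ∑ v, (F'.degree v - k) ≤ ∑ v, (F.degree v - k) := by
  gcongr with v
  exact degree_le_of_le hle

theorem card_connectedComponent_lt_of_isBridge (hxy : G.Adj x y) (hb : G.IsBridge s(x, y)) :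
    Nat.card G.ConnectedComponent < Nat.card (G.deleteEdges {s(x, y)}).ConnectedComponent := by
  simp only [Nat.card_eq_fintype_card]
  refine Fintype.card_lt_of_surjective_not_injective _
    (ConnectedComponent.surjective_map_ofLE (deleteEdges_le _)) fun hinj => ?_
  refine isBridge_iff.mp hb (ConnectedComponent.exact (hinj ?_))
  simpa using ConnectedComponent.sound hxy.reachable

theorem IsAcyclic.ncard_edgeSet_add_card_connectedComponent_le
    (hF : F.IsAcyclic) : F.edgeSet.ncard + Nat.card F.ConnectedComponent ≤ Fintype.card V := by
  refine hF.induction_on_leaf ?_ fun F x y hF hxy _ ih => ?_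
  · simpa [Nat.card_eq_fintype_card] using
      Nat.card_le_card_of_surjective (⊥ : SimpleGraph V).connectedComponentMk Quot.mk_surjective
  · have := ncard_edgeSet_deleteEdges_add_one hxy
    have := card_connectedComponent_lt_of_isBridge hxy (isAcyclic_iff_forall_adj_isBridge.mp hF hxy)
    omega

end Finite

section Counting

variable {V : Type} [Fintype V]

theorem deg_eq_degree (G : SimpleGraph V) (v : V) : deg G v = G.degree v := by
  rw [deg, Nat.card_eq_fintype_card, card_neighborSet_eq_degree]

theorem numLeaves_eq_card (F : SimpleGraph V) : numLeaves F = #{v | F.degree v = 1} := by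
  simp only [numLeaves, deg_eq_degree, Nat.card_eq_fintype_card, Fintype.card_subtype]

theorem maxDegree_le_maxDeg (G : SimpleGraph V) : G.maxDegree ≤ maxDeg G :=
  maxDegree_le_of_forall_degree_le _ _ fun v =>
    deg_eq_degree G v ▸ le_csSup (Set.finite_range _).bddAbove (Set.mem_range_self v)

theorem numEdgeComps_add_card_isIsolated_le (F : SimpleGraph V) :
    numEdgeComps F + #{v | F.IsIsolated v} ≤ Nat.card F.ConnectedComponent := by
  rw [← Fintype.card_subtype, ← Nat.card_eq_fintype_card, numEdgeComps, ← Nat.card_sum]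
  refine Nat.card_le_card_of_injective (Sum.elim Subtype.val fun v => F.connectedComponentMk v.1) ?_
  rintro (⟨c, a, b, hab, rfl⟩ | ⟨v, hv⟩) (⟨c', a', b', hab', rfl⟩ | ⟨w, hw⟩) h <;>
    simp only [Sum.elim_inl, Sum.elim_inr, ConnectedComponent.eq] at h
  · exact congrArg Sum.inl (Subtype.ext (ConnectedComponent.sound h))
  · obtain rfl := h.symm.eq_of_isIsolated hw
    exact (hw b hab).elim
  · obtain rfl := h.eq_of_isIsolated hv
    exact (hv b' hab').elim
  · exact congrArg Sum.inr (Subtype.ext (h.eq_of_isIsolated hv))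

theorem IsAcyclic.sum_degree_sub_two_add_two_mul_numEdgeComps_le_numLeaves {F : SimpleGraph V}
    (hF : F.IsAcyclic) : ∑ v, (F.degree v - 2) + 2 * numEdgeComps F ≤ numLeaves F := by
  have hvertex (v : V) : F.degree v - 2 + 2 =
      F.degree v + 2 * (if F.IsIsolated v then 1 else 0) + (if F.degree v = 1 then 1 else 0) := by
    rw [← degree_eq_zero]
    split_ifs <;> omega
  have hsum := sum_congr rfl fun v (_ : v ∈ univ) => hvertex v
  simp only [sum_add_distrib, ← mul_sum, ← card_filter, sum_const, card_univ, smul_eq_mul,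
    sum_degrees_eq_twice_card_edges] at hsum
  have hedges : F.edgeSet.ncard = #F.edgeFinset := by rw [← coe_edgeFinset, Set.ncard_coe_finset]
  have := hF.ncard_edgeSet_add_card_connectedComponent_le
  have := numEdgeComps_add_card_isIsolated_le F
  rw [numLeaves_eq_card]
  omega

end Counting

section Packing

variable {V : Type} {F G : SimpleGraph V} {x y : V}

theorem packs_bot (G : SimpleGraph V) : Packs G (⊥ : SimpleGraph V) :=
  ⟨Equiv.refl V, fun _ _ h => h.elim⟩

theorem packs_of_swap {f : V ≃ V} {u : V}
    (hf : ∀ a b, (F.deleteEdges {s(x, y)}).Adj a b → ¬G.Adj (f a) (f b))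
    (hx : ∀ z, ¬(F.deleteEdges {s(x, y)}).Adj x z) (huy : u ≠ y) (hyu : ¬G.Adj (f y) (f u))
    (hu : ∀ z, (F.deleteEdges {s(x, y)}).Adj u z → ¬G.Adj (f x) (f z)) : Packs G F := by
  refine ⟨(Equiv.swap x u).trans f, fun a b hab => ?_⟩
  simp only [Equiv.trans_apply]
  by_cases he : s(a, b) = s(x, y)
  · rcases Sym2.eq_iff.mp he with ⟨rfl, rfl⟩ | ⟨rfl, rfl⟩
    · rw [Equiv.swap_apply_left, Equiv.swap_apply_of_ne_of_ne hab.ne.symm huy.symm]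
      exact fun h => hyu h.symm
    · rw [Equiv.swap_apply_left, Equiv.swap_apply_of_ne_of_ne hab.ne huy.symm]
      exact hyu
  replace hab : (F.deleteEdges {s(x, y)}).Adj a b := deleteEdges_adj.mpr ⟨hab, he⟩
  have ha : a ≠ x := by rintro rfl; exact hx b hab
  have hb : b ≠ x := by rintro rfl; exact hx a hab.symm
  rcases eq_or_ne a u with rfl | hau
  · rw [Equiv.swap_apply_right, Equiv.swap_apply_of_ne_of_ne hb hab.ne.symm]
    exact hu b hab
  rcases eq_or_ne b u with rfl | hbu
  · rw [Equiv.swap_apply_right, Equiv.swap_apply_of_ne_of_ne ha hau]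
    exact fun h => hu a hab.symm h.symm
  rw [Equiv.swap_apply_of_ne_of_ne ha hau, Equiv.swap_apply_of_ne_of_ne hb hbu]
  exact hf a b hab

variable [Fintype V]

theorem exists_swap_partner (f : V ≃ V) {F' : SimpleGraph V} (hle : F' ≤ F)
    (hy : F'.degree y < F.degree y) (hc : G.Adj (f x) (f y))
    (h : 3 * G.maxDegree + ∑ v, (F.degree v - 2) < Fintype.card V) :
    ∃ u, u ≠ y ∧ ¬G.Adj (f y) (f u) ∧ ∀ z, F'.Adj u z → ¬G.Adj (f x) (f z) := by
  set S : Finset V := {z | G.Adj (f x) (f z)}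
  have hcard (v : V) : #{u | G.Adj v (f u)} ≤ G.maxDegree := by
    rw [card_equiv f (t := G.neighborFinset v) (by simp)]
    exact G.degree_le_maxDegree v
  have hS : ∑ z ∈ S, F'.degree z < ∑ z ∈ S, F.degree z :=
    sum_lt_sum (fun z _ => degree_le_of_le hle) ⟨y, by simpa [S] using hc, hy⟩
  have hbad : #(({u | G.Adj (f y) (f u)} : Finset V) ∪ S.biUnion (F'.neighborFinset ·) ∪ {y}) <
      #(univ : Finset V) :=
    calc _ ≤ #{u | G.Adj (f y) (f u)} + #(S.biUnion (F'.neighborFinset ·)) + #{y} := by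
          grw [card_union_le, card_union_le]
      _ ≤ G.maxDegree + ∑ z ∈ S, F'.degree z + 1 := by
          grw [hcard, card_biUnion_le, card_singleton]
          rfl
      _ ≤ G.maxDegree + (2 * #S + ∑ z, (F.degree z - 2)) := by
          grw [← sum_le_mul_card_add_sum_tsub]
          omega
      _ < #univ := by
          have : #S ≤ G.maxDegree := hcard (f x)
          rw [card_univ]
          omega
  obtain ⟨u, -, hu⟩ := exists_mem_notMem_of_card_lt_card hbad
  simp only [mem_union, mem_filter, mem_univ, true_and, mem_biUnion, mem_neighborFinset,
    mem_singleton, not_or, not_exists, not_and, S] at hu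
  exact ⟨u, hu.2, hu.1.1, fun z hz => (hu.1.2 z · hz.symm)⟩

theorem packs_of_packs_deleteEdges (hxy : F.Adj x y) (hx : F.degree x = 1)
    (h : 3 * G.maxDegree + ∑ v, (F.degree v - 2) < Fintype.card V)
    (hpack : Packs G (F.deleteEdges {s(x, y)})) : Packs G F := by
  obtain ⟨f, hf⟩ := hpack
  have hx' := not_adj_deleteEdges_of_degree_eq_one hxy hx
  by_cases hc : G.Adj (f x) (f y)
  · obtain ⟨u, huy, hyu, hu⟩ :=
      exists_swap_partner f (deleteEdges_le {s(x, y)})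
        (degree_lt_degree_of_le_of_not_adj (deleteEdges_le _) hxy.symm (by simp [Sym2.eq_swap])) hc h
    exact packs_of_swap hf hx' huy hyu hu
  · exact packs_of_swap hf hx' hxy.ne (fun h => hc h.symm) fun z h => (hx' z h).elim

theorem IsAcyclic.packs_of_three_mul_maxDegree_add_lt (hF : F.IsAcyclic)
    (h : 3 * G.maxDegree + ∑ v, (F.degree v - 2) < Fintype.card V) : Packs G F := by
  revert h
  refine hF.induction_on_leaf (fun _ => packs_bot G) fun F x y _ hxy hx ih h =>
    packs_of_packs_deleteEdges hxy hx h (ih (lt_of_le_of_lt ?_ h))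
  grw [sum_degree_tsub_le_of_le (deleteEdges_le _)]

end Packing

end SimpleGraph

/-- If F is a forest and G a graph on n vertices with
3Δ(G) + ℓ(F) - 2comp(F) < n, then F and G pack. -/
theorem forest_packing {V : Type} [Fintype V] {n : ℕ} (hV : Fintype.card V = n)
    (F G : SimpleGraph V) (hF : F.IsAcyclic)
    (h : 3 * (maxDeg G : ℤ) + numLeaves F - 2 * numEdgeComps F < n) :
    Packs G F := by
  subst hV
  have := hF.sum_degree_sub_two_add_two_mul_numEdgeComps_le_numLeaves
  have := maxDegree_le_maxDeg G
  exact hF.packs_of_three_mul_maxDegree_add_lt (by omega)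
end

section
/- Let T be a tree of order t and let π = (d_1, …, d_n) be a nonincreasing graphic sequence with n ≥ t. If d_{t-1} ≥ t - 1, then π has a realization containing T as a subgraph. -/
open SimpleGraph
open scoped Classical

/-!
A 2-switch, deleting the edges `ac`, `bd` and adding `ab`, `cd`, preserves every degree. List the
vertices of `T` by increasing distance from a root; as no vertex of a tree has two neighbours
closer to the root, each vertex then has at most one earlier neighbour. Place the `i`-th vertex
on the `i`-th largest degree and create the tree edges vertex by vertex: if the edge from `r` to
its earlier neighbour `q` is missing, then `deg q ≥ t - 1 ≥ r` gives a neighbour `c > r` of `q`,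
and as `deg c ≤ deg r` there is a neighbour `d` of `r` not adjacent to `c`. The switch on
`q, r, c, d` creates `qr` and only touches edges at `r` and `c`, so the edges already placed among
the vertices before `r` survive.
-/

namespace SimpleGraph

variable {V : Type}

def twoSwitch (G : SimpleGraph V) (a b c d : V) : SimpleGraph V :=
  fromEdgeSet ((G.edgeSet \ {s(a, c), s(b, d)}) ∪ {s(a, b), s(c, d)})

variable {G : SimpleGraph V} {a b c d : V}

lemma twoSwitch_adj (hab : a ≠ b) (hcd : c ≠ d) {x y : V} :
    (G.twoSwitch a b c d).Adj x y ↔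
      (G.Adj x y ∧ ¬ ((x = a ∧ y = c ∨ x = c ∧ y = a) ∨ (x = b ∧ y = d ∨ x = d ∧ y = b))) ∨
      ((x = a ∧ y = b ∨ x = b ∧ y = a) ∨ (x = c ∧ y = d ∨ x = d ∧ y = c)) := by
  simp only [twoSwitch, fromEdgeSet_adj, Set.mem_union, Set.mem_sdiff, Set.mem_insert_iff,
    Set.mem_singleton_iff, mem_edgeSet, Sym2.eq_iff]
  grind [Adj.ne]

lemma IsAcyclic.eq_of_adj_of_dist_lt (hG : G.IsAcyclic) (u : V) {x y z : V}
    (hx : G.Adj x z) (hy : G.Adj y z) (hxz : G.dist u x < G.dist u z)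
    (hyz : G.dist u y < G.dist u z) : x = y := by
  have hreach : G.Reachable u z := Reachable.of_dist_ne_zero (by omega)
  obtain ⟨p, hp, -⟩ := hreach.exists_path_of_dist
  -- a neighbour of `z` closer to `u` lies on a shortest path from `u` to `z`
  have hpen : ∀ w, G.Adj w z → G.dist u w < G.dist u z → w = p.penultimate := by
    intro w hw hwz
    obtain ⟨q, hq, hqlen⟩ := (hreach.trans hw.symm.reachable).exists_path_of_dist
    have hz : z ∉ q.support := fun hz => by
      have := (dist_le (q.takeUntil z hz)).trans (q.length_takeUntil_le_length hz)
      omega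
    exact hG.eq_penultimate_of_adj_end hp hw.symm
      (hG.mem_support_of_ne_mem_support_of_adj_of_isPath hp hq hw.symm hz)
  rw [hpen x hx hxz, hpen y hy hyz]

section Finite

variable [Fintype V]

lemma degree_eq_of_adj_iff {G' : SimpleGraph V} {v : V} (h : ∀ x, G'.Adj v x ↔ G.Adj v x) :
    G'.degree v = G.degree v := by
  simp only [← card_neighborFinset_eq_degree]
  congr 1
  ext x
  simp [h]

lemma degree_eq_of_adj_iff_swap {G' : SimpleGraph V} {v w w' : V} (hw : G.Adj v w)
    (hw' : ¬ G.Adj v w') (h : ∀ x, G'.Adj v x ↔ (G.Adj v x ∧ x ≠ w) ∨ x = w') :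
    G'.degree v = G.degree v := by
  have hN : G'.neighborFinset v = insert w' ((G.neighborFinset v).erase w) := by
    ext x
    simp [h, and_comm, or_comm]
  have hpos : 0 < G.degree v := G.degree_pos_iff_exists_adj v |>.2 ⟨w, hw⟩
  rw [← card_neighborFinset_eq_degree, hN, Finset.card_insert_of_notMem (by simp [hw']),
    Finset.card_erase_of_mem (by simpa using hw), card_neighborFinset_eq_degree]
  omega

lemma exists_adj_not_adj_of_degree_le (hne : a ≠ b)
    (hab : ¬ G.Adj a b) (hac : G.Adj a c) (hdeg : G.degree c ≤ G.degree b) :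
    ∃ d, G.Adj b d ∧ ¬ G.Adj c d ∧ d ≠ c := by
  -- otherwise `a` and the neighbours of `b` other than `c` are neighbours of `c` other than `b`
  by_contra! h
  have hsub : insert a ((G.neighborFinset b).erase c) ⊆ (G.neighborFinset c).erase b := by
    intro d hd
    simp only [Finset.mem_insert, Finset.mem_erase, mem_neighborFinset] at hd ⊢
    rcases hd with rfl | ⟨hdc, hbd⟩
    · exact ⟨hne, hac.symm⟩
    · exact ⟨hbd.ne', by_contra fun hcd => hdc (h d hbd hcd)⟩
  have hcard := Finset.card_le_card hsub
  rw [Finset.card_insert_of_notMem (by simp [G.adj_comm b a, hab]), Finset.card_erase_eq_ite,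
    Finset.card_erase_eq_ite] at hcard
  simp only [mem_neighborFinset, card_neighborFinset_eq_degree, G.adj_comm c b] at hcard
  split_ifs at hcard with hbc
  · have := G.degree_pos_iff_exists_adj b |>.2 ⟨c, hbc⟩
    omega
  · omega

lemma degree_twoSwitch (hac : G.Adj a c) (hbd : G.Adj b d) (hab : ¬ G.Adj a b)
    (hcd : ¬ G.Adj c d) (hne_ab : a ≠ b) (hne_cd : c ≠ d) (v : V) :
    (G.twoSwitch a b c d).degree v = G.degree v := by
  have hac' := hac.ne
  have hbd' := hbd.ne
  have had : a ≠ d := by rintro rfl; exact hab hbd.symm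
  have hcb : c ≠ b := by rintro rfl; exact hab hac
  have hadj := fun x y => twoSwitch_adj (G := G) (x := x) (y := y) hne_ab hne_cd
  by_cases hva : v = a
  · subst hva
    exact degree_eq_of_adj_iff_swap hac hab fun x => by grind
  by_cases hvb : v = b
  · subst hvb
    exact degree_eq_of_adj_iff_swap hbd (fun h => hab h.symm) fun x => by grind
  by_cases hvc : v = c
  · subst hvc
    exact degree_eq_of_adj_iff_swap hac.symm hcd fun x => by grind [Adj.symm]
  by_cases hvd : v = d
  · subst hvd
    exact degree_eq_of_adj_iff_swap hbd.symm (fun h => hcd h.symm) fun x => by grind [Adj.symm]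
  exact degree_eq_of_adj_iff fun x => by grind

lemma exists_degree_eq_adj_of_degree_le (hne : a ≠ b)
    (hab : ¬ G.Adj a b) (hac : G.Adj a c) (hdeg : G.degree c ≤ G.degree b) :
    ∃ G' : SimpleGraph V, (∀ v, G'.degree v = G.degree v) ∧ G'.Adj a b ∧
      ∀ x y, G.Adj x y → x ≠ b → y ≠ b → x ≠ c → y ≠ c → G'.Adj x y := by
  obtain ⟨d, hbd, hcd, hdc⟩ := exists_adj_not_adj_of_degree_le hne hab hac hdeg
  refine ⟨G.twoSwitch a b c d, degree_twoSwitch hac hbd hab hcd hne hdc.symm,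
    (twoSwitch_adj hne hdc.symm).2 (by tauto), fun x y hxy hxb hyb hxc hyc => ?_⟩
  exact (twoSwitch_adj hne hdc.symm).2 (Or.inl ⟨hxy, by tauto⟩)

lemma IsTree.exists_equiv_fin_lower_neighbor_unique {T : SimpleGraph V}
    (hT : T.IsTree) : ∃ e : V ≃ Fin (Fintype.card V),
      ∀ ⦃x y z⦄, T.Adj x z → T.Adj y z → e x < e z → e y < e z → x = y := by
  obtain ⟨r⟩ := hT.connected.nonempty
  let e₀ := Fintype.equivFin V
  -- list the vertices by increasing distance from `r`
  obtain ⟨σ, hσ⟩ : ∃ σ : Equiv.Perm (Fin (Fintype.card V)),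
      Monotone ((fun i => T.dist r (e₀.symm i)) ∘ σ) := ⟨_, Tuple.monotone_sort _⟩
  let e := e₀.trans σ.symm
  have hlt : ∀ ⦃x z⦄, T.Adj x z → e x < e z → T.dist r x < T.dist r z := by
    intro x z hxz h
    have := hσ h.le
    simp only [e, Function.comp_apply, Equiv.trans_apply, Equiv.apply_symm_apply,
      Equiv.symm_apply_apply] at this
    exact this.lt_of_ne (hT.dist_ne_of_adj r hxz)
  exact ⟨e, fun x y z hx hy hxz hyz =>
    hT.isAcyclic.eq_of_adj_of_dist_lt r hx hy (hlt hx hxz) (hlt hy hyz)⟩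

end Finite

end SimpleGraph

section Realization

variable {n : ℕ} {π : Fin n → ℕ} {G : SimpleGraph (Fin n)}

lemma isRealization_iff : IsRealization G π ↔ ∀ i, G.degree i = π i := by
  simp only [IsRealization, deg, ← card_neighborSet_eq_degree, Nat.card_eq_fintype_card]

lemma IsRealization.exists_isRealization_adj (hπ : Antitone π) (hG : IsRealization G π)
    {q r : Fin n} (hqr : q < r) (hdeg : (r : ℕ) ≤ π q) :
    ∃ G', IsRealization G' π ∧ G'.Adj q r ∧ ∀ x y, G.Adj x y → x < r → y < r → G'.Adj x y := by
  rw [isRealization_iff] at hG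
  by_cases hadj : G.Adj q r
  · exact ⟨G, isRealization_iff.2 hG, hadj, fun x y h _ _ => h⟩
  -- `q` has at most `r - 1` neighbours below `r`, so one of its neighbours `c` lies above `r`
  have hlt : ((Finset.Iio r).erase q).card < (G.neighborFinset q).card := by
    rw [Finset.card_erase_of_mem (by simpa using hqr), Fin.card_Iio, card_neighborFinset_eq_degree,
      hG]
    omega
  obtain ⟨c, hqc, hc⟩ := Finset.exists_mem_notMem_of_card_lt_card hlt
  rw [mem_neighborFinset] at hqc
  have hrc : r < c := by
    simp only [Finset.mem_erase, Finset.mem_Iio, not_and, not_lt] at hc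
    exact (hc hqc.ne').lt_of_ne fun h => hadj (h ▸ hqc)
  obtain ⟨G', hdeg', hqr', hkeep⟩ :=
    exists_degree_eq_adj_of_degree_le hqr.ne hadj hqc (by rw [hG, hG]; exact hπ hrc.le)
  refine ⟨G', isRealization_iff.2 fun v => (hdeg' v).trans (hG v), hqr', ?_⟩
  intro x y hxy hx hy
  exact hkeep x y hxy hx.ne hy.ne (hx.trans hrc).ne (hy.trans hrc).ne

lemma IsRealization.exists_isRealization_le (hπ : Antitone π) (hG : IsRealization G π)
    {H : SimpleGraph (Fin n)} (hH : ∀ ⦃i j k⦄, H.Adj i k → H.Adj j k → i < k → j < k → i = j)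
    (hdeg : ∀ i k, H.Adj i k → i < k → (k : ℕ) ≤ π i) :
    ∃ G', IsRealization G' π ∧ H ≤ G' := by
  suffices ∀ m, ∃ G', IsRealization G' π ∧ ∀ i k, H.Adj i k → i < k → (k : ℕ) < m → G'.Adj i k by
    obtain ⟨G', hG', hle⟩ := this n
    refine ⟨G', hG', fun i k hik => ?_⟩
    rcases lt_or_gt_of_ne hik.ne with h | h
    · exact hle i k hik h k.isLt
    · exact (hle k i hik.symm h i.isLt).symm
  intro m
  induction m with
  | zero => exact ⟨G, hG, fun _ _ _ _ h => absurd h (Nat.not_lt_zero _)⟩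
  | succ m ih =>
    obtain ⟨G₁, hG₁, hle₁⟩ := ih
    by_cases hq : ∃ q r, H.Adj q r ∧ q < r ∧ (r : ℕ) = m
    · obtain ⟨q, r, hqr, hlt, rfl⟩ := hq
      obtain ⟨G₂, hG₂, hqr₂, hkeep⟩ := hG₁.exists_isRealization_adj hπ hlt (hdeg q r hqr hlt)
      refine ⟨G₂, hG₂, fun i k hik hlt' hk => ?_⟩
      rcases (Nat.lt_succ_iff_lt_or_eq.1 hk) with hk | hk
      · exact hkeep i k (hle₁ i k hik hlt' hk) (hlt'.trans hk) hk
      · obtain rfl : k = r := Fin.ext hk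
        obtain rfl := hH hik hqr hlt' hlt
        exact hqr₂
    · push Not at hq
      refine ⟨G₁, hG₁, fun i k hik hlt hk => ?_⟩
      exact hle₁ i k hik hlt ((Nat.lt_succ_iff_lt_or_eq.1 hk).resolve_right (hq i k hik hlt))

end Realization

/-- If π is graphic of length n ≥ t with d_{t-1} ≥ t-1, then π is potentially T-graphic
for any tree T of order t. -/
theorem tree_potentially {t n : ℕ} {W : Type} [Fintype W] (T : SimpleGraph W)
    (hT : T.IsTree) (hcard : Fintype.card W = t) (ht : 2 ≤ t) (htn : t ≤ n)
    (π : Fin n → ℕ) (hmono : Antitone π) (hg : Graphic π)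
    (hd : t - 1 ≤ π ⟨t - 2, by omega⟩) :
    PotentiallyGraphic π T := by
  obtain ⟨G₀, hG₀⟩ := hg
  obtain ⟨e, he⟩ := hT.exists_equiv_fin_lower_neighbor_unique
  subst hcard
  let f : W ↪ Fin n := e.toEmbedding.trans (Fin.castLEEmb htn)
  have hf : ∀ x, (f x : ℕ) < Fintype.card W := fun x => (e x).isLt
  have hlower : ∀ ⦃i j k⦄, (T.map f).Adj i k → (T.map f).Adj j k → i < k → j < k → i = j := by
    intro i j k hik hjk hi hj
    obtain ⟨x, z, hxz, rfl, rfl⟩ := (map_adj f T _ _).1 hik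
    obtain ⟨y, z', hyz, rfl, hz⟩ := (map_adj f T _ _).1 hjk
    obtain rfl := f.injective hz
    rw [he hxz hyz hi hj]
  have hdeg : ∀ i k, (T.map f).Adj i k → i < k → (k : ℕ) ≤ π i := by
    intro i k hik hlt
    obtain ⟨x, z, -, rfl, rfl⟩ := (map_adj f T _ _).1 hik
    have hx : (f x : ℕ) ≤ Fintype.card W - 2 := by have := hf z; omega
    calc (f z : ℕ) ≤ Fintype.card W - 1 := by have := hf z; omega
      _ ≤ π ⟨Fintype.card W - 2, _⟩ := hd
      _ ≤ π (f x) := hmono (Fin.le_def.2 hx)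
  obtain ⟨G, hG, hle⟩ := hG₀.exists_isRealization_le hmono hlower hdeg
  exact ⟨G, hG, f, fun x y h => hle (map_adj_apply.2 h)⟩
end
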